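/- arXiv:2303.10619 — 2 statements merged into one kernel-verified Lean document; each statement's English description precedes it below -/
import Mathlib

section
/- Under Assumption 1, for every n ∈ ℕ the function v_n: Δ(Ω) → ℝ is upper semicontinuous. -/
open Filter Topology
open scoped Classical

noncomputable section

/-- Δ(Ω): beliefs, i.e. probability distributions on the finite state space Ω,
as a subspace of Ω → ℝ (its topology agrees with the total-variation one). -/
abbrev Belief (Ω : Type*) [Fintype Ω] :=
  {p : Ω → ℝ // (∀ ω, 0 ≤ p ω) ∧ ∑ ω, p ω = 1}

variable {Ω : Type*} [Fintype Ω]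

/-- An element of F₀: a finite-support experiment, i.e. a finitely supported probability
distribution over beliefs (keys are the distinct posteriors p_j, values the positive
weights λ_j). -/
structure SPExp (Ω : Type*) [Fintype Ω] where
  w : Belief Ω →₀ ℝ
  nonneg : ∀ p, 0 ≤ w p
  sum_one : ∑ p ∈ w.support, w p = 1

namespace SPExp

/-- τ(e): the support of an experiment. -/
def tau (e : SPExp Ω) : Finset (Belief Ω) := e.w.support

/-- Expectation of a real-valued function under an experiment. -/
def expect (e : SPExp Ω) (f : Belief Ω → ℝ) : ℝ := ∑ p ∈ e.w.support, e.w p * f p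

/-- σ(e): the barycenter (expectation) of an experiment. -/
def sigma (e : SPExp Ω) : Belief Ω :=
  ⟨fun ω => ∑ p ∈ e.w.support, e.w p * p.val ω,
   fun ω => Finset.sum_nonneg fun p _ => mul_nonneg (e.nonneg p) (p.2.1 ω),
   by
     calc ∑ ω, ∑ p ∈ e.w.support, e.w p * p.val ω
         = ∑ p ∈ e.w.support, ∑ ω, e.w p * p.val ω := Finset.sum_comm
       _ = ∑ p ∈ e.w.support, e.w p * ∑ ω, p.val ω := by
           refine Finset.sum_congr rfl fun p _ => ?_
           rw [Finset.mul_sum]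
       _ = ∑ p ∈ e.w.support, e.w p := by
           refine Finset.sum_congr rfl fun p _ => ?_
           rw [p.2.2, mul_one]
       _ = 1 := e.sum_one⟩

/-- The trivial experiment (1, p). -/
def triv (p : Belief Ω) : SPExp Ω where
  w := Finsupp.single p 1
  nonneg := fun q => by
    rw [Finsupp.single_apply]
    split <;> norm_num
  sum_one := by
    rw [Finsupp.support_single_ne_zero _ one_ne_zero]
    simp

end SPExp

/-- T: the set of trivial experiments. -/
def Trivials (Ω : Type*) [Fintype Ω] : Set (SPExp Ω) := Set.range SPExp.triv

/-- Weak convergence of experiments, viewed as Borel probability measures on Δ(Ω). -/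
def WeakTendsto (es : ℕ → SPExp Ω) (e : SPExp Ω) : Prop :=
  ∀ f : Belief Ω → ℝ, Continuous f →
    Tendsto (fun i => (es i).expect f) atTop (𝓝 (e.expect f))

/-- Convergence of beliefs in total variation. -/
def TVTendsto (ps : ℕ → Belief Ω) (p : Belief Ω) : Prop :=
  Tendsto (fun i => ∑ ω, |(ps i).val ω - p.val ω|) atTop (𝓝 0)

/-- Histories, most recent step first: entries are (experiment taken, realized posterior);
the starting belief is kept separately. -/
abbrev Hist (Ω : Type*) [Fintype Ω] := List (SPExp Ω × Belief Ω)

/-- last(ξ): the current belief after history ξ started at μ. -/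
def lastBelief (μ : Belief Ω) : Hist Ω → Belief Ω
  | [] => μ
  | (_, p) :: _ => p

/-- Pr[ξ]: the probability of a history. -/
def histProb : Hist Ω → ℝ
  | [] => 1
  | (e, p) :: ξ => e.w p * histProb ξ

/-- A sequential persuasion starting from μ with feasible experiments F, given by its
history-dependent choice of the next (feasible, Bayes-plausible) experiment.  An n-step
sequential persuasion is such a strategy used for n steps; an infinite sequential
persuasion is the strategy itself. -/
structure SeqP {Ω : Type*} [Fintype Ω] (F : Set (SPExp Ω)) (μ : Belief Ω) where
  next : Hist Ω → SPExp Ω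
  feasible : ∀ ξ, next ξ ∈ F
  bayes : ∀ ξ, (next ξ).sigma = lastBelief μ ξ

variable {F : Set (SPExp Ω)} {μ : Belief Ω}

/-- Expectation of g over the n-step histories of S extending ξ. -/
def histExp (S : SeqP F μ) (g : Hist Ω → ℝ) : ℕ → Hist Ω → ℝ
  | 0, ξ => g ξ
  | n + 1, ξ => (S.next ξ).expect fun p => histExp S g n ((S.next ξ, p) :: ξ)

/-- Ξ_n: the set of n-step histories of S. -/
def Hists (S : SeqP F μ) : ℕ → Set (Hist Ω)
  | 0 => {[]}
  | n + 1 => {ξ' | ∃ ξ ∈ Hists S n, ∃ p ∈ (S.next ξ).tau, ξ' = (S.next ξ, p) :: ξ}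

/-- ξ padded by l trivial steps. -/
def padHist (μ : Belief Ω) (ξ : Hist Ω) (l : ℕ) : Hist Ω :=
  List.replicate l (SPExp.triv (lastBelief μ ξ), lastBelief μ ξ) ++ ξ

/-- S terminates after ξ: all subsequent choices (along trivial continuations of ξ)
are the trivial experiment. -/
def TerminatesAfter (S : SeqP F μ) (ξ : Hist Ω) : Prop :=
  ∀ l : ℕ, S.next (padHist μ ξ l) = SPExp.triv (lastBelief μ ξ)

/-- 𝒱(S⁽ⁿ⁾) = E[v(b_n)], the expected utility of the n-step persuasion given by the
first n steps of S. -/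
def stepUtility (v : Belief Ω → ℝ) (S : SeqP F μ) (n : ℕ) : ℝ :=
  histExp S (fun ξ => v (lastBelief μ ξ)) n []

/-- Pr[S terminates after n steps]. -/
def termProb (S : SeqP F μ) (n : ℕ) : ℝ :=
  histExp S (fun ξ => if TerminatesAfter S ξ then 1 else 0) n []

/-- 𝒱(S) for an infinite sequential persuasion S. -/
def infUtility (v : Belief Ω → ℝ) (S : SeqP F μ) : ℝ :=
  ⨆ n : ℕ, histExp S (fun ξ => if TerminatesAfter S ξ then v (lastBelief μ ξ) else 0) n []

/-- Pr[b_n ∈ O] for the belief b_n induced by S after n steps. -/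
def massIn (S : SeqP F μ) (O : Set (Belief Ω)) (n : ℕ) : ℝ :=
  histExp S (fun ξ => if lastBelief μ ξ ∈ O then 1 else 0) n []

/-- v_n(p): the optimal value over n-step sequential persuasions starting from p. -/
def vN (F : Set (SPExp Ω)) (v : Belief Ω → ℝ) (n : ℕ) (p : Belief Ω) : ℝ :=
  ⨆ S : SeqP F p, stepUtility v S n

/-- v_∞(p): the optimal value over infinite sequential persuasions starting from p. -/
def vInf (F : Set (SPExp Ω)) (v : Belief Ω → ℝ) (p : Belief Ω) : ℝ :=
  ⨆ S : SeqP F p, infUtility v S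

/-- Assumption 1: a uniform support bound h, and weak closedness of F. -/
def Assumption1 (F : Set (SPExp Ω)) (h : ℕ) : Prop :=
  (∀ e ∈ F, e.tau.card ≤ h) ∧
  ∀ es : ℕ → SPExp Ω, (∀ i, es i ∈ F) → ∀ e : SPExp Ω, WeakTendsto es e → e ∈ F

/-- Shannon entropy of a belief. -/
def entropy (p : Belief Ω) : ℝ := -∑ ω, p.val ω * Real.log (p.val ω)

/-- Assumption 2: every nontrivial feasible experiment lowers expected entropy by δ. -/
def Assumption2 (F : Set (SPExp Ω)) (δ : ℝ) : Prop :=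
  ∀ e ∈ F \ Trivials Ω, e.expect entropy ≤ entropy e.sigma - δ

/-- S is (effectively) an n-step sequential persuasion: after n steps it only takes
trivial experiments. -/
def IsNStep (S : SeqP F μ) (n : ℕ) : Prop :=
  ∀ ξ : Hist Ω, n ≤ ξ.length → S.next ξ = SPExp.triv (lastBelief μ ξ)

/-- Assumption 3 at prior μ: a sequence of finite-step sequential persuasions whose
values tend to v_∞(μ) and which terminate at a uniform rate. -/
def Assumption3 (F : Set (SPExp Ω)) (v : Belief Ω → ℝ) (μ : Belief Ω) : Prop :=
  ∃ (nk : ℕ → ℕ) (Sk : ℕ → SeqP F μ),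
    (∀ k, IsNStep (Sk k) (nk k)) ∧
    Tendsto (fun k => stepUtility v (Sk k) (nk k)) atTop (𝓝 (vInf F v μ)) ∧
    ∀ ε : ℝ, 0 < ε → ∃ N : ℕ, ∀ k, N ≤ nk k → 1 - ε ≤ termProb (Sk k) N

/-- v̂: the concave closure of v (the value of unconstrained Bayesian persuasion). -/
def concaveClosure (v : Belief Ω → ℝ) (p : Belief Ω) : ℝ :=
  sSup {x : ℝ | ∃ e : SPExp Ω, e.sigma = p ∧ x = e.expect v}

/-- O is implementable for (μ, F). -/
def Implementable (F : Set (SPExp Ω)) (μ : Belief Ω) (O : Set (Belief Ω)) : Prop :=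
  ∀ ε : ℝ, 0 < ε → ∃ (n : ℕ) (S : SeqP F μ), 1 - ε < massIn S O n

/-- S is a Markov sequential persuasion compatible with (μ, D, Z, ρ). -/
def MarkovCompatible (S : SeqP F μ) (D Z : Set (Belief Ω)) (ρ : Belief Ω → SPExp Ω) : Prop :=
  ∀ ξ : Hist Ω,
    (lastBelief μ ξ ∈ D → S.next ξ = ρ (lastBelief μ ξ)) ∧
    (lastBelief μ ξ ∈ Z → S.next ξ = SPExp.triv (lastBelief μ ξ))

/-- The j-th child of vertex m at depth n of the infinite h-ary tree. -/
def treeChild {h n : ℕ} (m : Fin (h ^ n)) (j : Fin h) : Fin (h ^ (n + 1)) :=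
  ⟨m.val * h + j.val, by
    have h1 : m.val + 1 ≤ h ^ n := m.isLt
    have h2 : j.val < h := j.isLt
    calc m.val * h + j.val < m.val * h + h := by omega
      _ = (m.val + 1) * h := by ring
      _ ≤ h ^ n * h := Nat.mul_le_mul h1 le_rfl
      _ = h ^ (n + 1) := (pow_succ h n).symm⟩

/-- An h-branching sequential persuasion starting from μ. -/
structure HBranch (Ω : Type*) [Fintype Ω] (F : Set (SPExp Ω)) (h : ℕ) (μ : Belief Ω) where
  π : ∀ n : ℕ, Fin (h ^ n) → ℝ
  β : ∀ n : ℕ, Fin (h ^ n) → Belief Ω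
  η : ∀ n : ℕ, Fin (h ^ n) → SPExp Ω
  π_nonneg : ∀ n m, 0 ≤ π n m
  π_sum : ∀ n : ℕ, ∑ m, π n m = 1
  η_mem : ∀ n m, η n m ∈ F
  β_root : ∀ m, β 0 m = μ
  compat_sigma : ∀ n m, (η n m).sigma = β n m
  compat_tau : ∀ (n : ℕ) (m : Fin (h ^ n)), ∀ p ∈ (η n m).tau,
    ∃ j : Fin h, β (n + 1) (treeChild m j) = p
  consistent : ∀ (n : ℕ) (m : Fin (h ^ n)) (p : Belief Ω),
    (∑ j : Fin h, if β (n + 1) (treeChild m j) = p then π (n + 1) (treeChild m j) else 0)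
      = π n m * (η n m).w p

/-- c' (at depth n + l) is a descendant of c (at depth n) in the h-ary tree. -/
def Descendant {h : ℕ} : {n : ℕ} → (l : ℕ) → Fin (h ^ n) → Fin (h ^ (n + l)) → Prop
  | _, 0, c, c' => c = c'
  | _, l + 1, c, c' => ∃ c'' j, Descendant l c c'' ∧ c' = treeChild c'' j

namespace HBranch

variable {h : ℕ}

/-- B terminates after vertex m at depth n. -/
def TermAfter (B : HBranch Ω F h μ) (n : ℕ) (m : Fin (h ^ n)) : Prop :=
  B.η n m ∈ Trivials Ω ∧
  ∀ (l : ℕ) (c' : Fin (h ^ (n + l))), Descendant l m c' → 0 < B.π (n + l) c' →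
    B.η (n + l) c' ∈ Trivials Ω

/-- Pr[B terminates after n steps]. -/
def termProb (B : HBranch Ω F h μ) (n : ℕ) : ℝ :=
  ∑ m : Fin (h ^ n), if B.TermAfter n m then B.π n m else 0

end HBranch

/-- B represents the infinite sequential persuasion S (via maps r_n : C_n → Ξ_n). -/
def Represents (S : SeqP F μ) {h : ℕ} (B : HBranch Ω F h μ) : Prop :=
  ∃ r : ∀ n : ℕ, Fin (h ^ n) → Hist Ω,
    ∀ n : ℕ,
      (∀ c, r n c ∈ Hists S n) ∧
      (∀ ξ ∈ Hists S n, histProb ξ = ∑ c, if r n c = ξ then B.π n c else 0) ∧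
      (∀ c, lastBelief μ (r n c) = B.β n c ∧ S.next (r n c) = B.η n c) ∧
      (∀ l : ℕ, ∀ ξ ∈ Hists S n, ∀ ξ' ∈ Hists S (n + l),
        (ξ <:+ ξ' ↔
          ∀ c' : Fin (h ^ (n + l)), r (n + l) c' = ξ' →
            ∃ c : Fin (h ^ n), r n c = ξ ∧ Descendant l c c'))

/-- The number of nontrivial experiments taken along a history. -/
def nontrivCount (ξ : Hist Ω) : ℕ :=
  ξ.countP fun s => decide (s.1 ∉ Trivials Ω)

end

/-!
By dynamic programming, `v_{n+1}(p) = sup_{e ∈ 𝓕(p)} E_e[v_n]`, so it suffices that this one-step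
operator preserves upper semicontinuity. Under Assumption 1 every feasible experiment is given by
weights `l` in the standard simplex on `Fin h` and posteriors `q : Fin h → Δ(Ω)`, and weak
closedness of `F` makes the set of feasible pairs `(l, q)` closed, hence compact. The one-step
value is the maximum of the upper semicontinuous function `(l, q) ↦ ∑ⱼ lⱼ g(qⱼ)` over the fibres
of the continuous barycentre map, so its superlevel sets are continuous images of compact
superlevel sets, hence closed.
-/

theorem UpperSemicontinuous.mul_of_continuous_nonneg {α : Type*} [TopologicalSpace α]
    {f g : α → ℝ} (hg : UpperSemicontinuous g) (hf : Continuous f) (hf0 : ∀ x, 0 ≤ f x) :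
    UpperSemicontinuous fun x => f x * g x := by
  intro x y hy
  obtain ⟨c, hgc, hc⟩ : ∃ c, g x < c ∧ f x * c < y :=
    (((continuous_const.mul continuous_id).tendsto (g x)).eventually (gt_mem_nhds hy)).exists_gt
  filter_upwards [hg x c hgc, ((hf.mul continuous_const).tendsto x).eventually (gt_mem_nhds hc)]
    with z hgz hfz
  calc f z * g z ≤ f z * c := mul_le_mul_of_nonneg_left hgz.le (hf0 z)
    _ < y := hfz

theorem upperSemicontinuous_sSup_image_fiber {X Y : Type*} [TopologicalSpace X]
    [CompactSpace X] [TopologicalSpace Y] [T2Space Y] {π : X → Y} (hπ : Continuous π)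
    (hπs : Function.Surjective π) {Φ : X → ℝ} (hΦ : UpperSemicontinuous Φ) :
    UpperSemicontinuous fun y => sSup (Φ '' (π ⁻¹' {y})) := by
  refine upperSemicontinuous_iff_isClosed_preimage.2 fun c => ?_
  -- the supremum over a compact fibre is attained
  have hsuperlevel :
      (fun y => sSup (Φ '' (π ⁻¹' {y}))) ⁻¹' Set.Ici c = π '' (Φ ⁻¹' Set.Ici c) := by
    ext y
    have hfiber : IsCompact (π ⁻¹' {y}) := (isClosed_singleton.preimage hπ).isCompact
    obtain ⟨x, hx, hmax⟩ :=
      (hΦ.upperSemicontinuousOn _).exists_isMaxOn (hπs y) hfiber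
    have hsup : sSup (Φ '' (π ⁻¹' {y})) = Φ x := IsGreatest.csSup_eq
      ⟨Set.mem_image_of_mem Φ hx, Set.forall_mem_image.2 fun _ hx' => hmax hx'⟩
    simp only [Set.mem_preimage, Set.mem_Ici, hsup, Set.mem_image]
    constructor
    · intro hcx
      exact ⟨x, hcx, hx⟩
    · rintro ⟨x', hcx', rfl⟩
      exact hcx'.trans (hmax rfl)
  rw [hsuperlevel]
  exact ((hΦ.isClosed_preimage c).isCompact.image hπ).isClosed

lemma Finsupp.sum_mapDomain_equivFunOnFinite_symm {ι α M N : Type*} [Fintype ι]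
    [AddCommMonoid M] [AddCommMonoid N] (l : ι → M) (q : ι → α) {g : α → M → N}
    (hg0 : ∀ a, g a 0 = 0) (hgadd : ∀ a m₁ m₂, g a (m₁ + m₂) = g a m₁ + g a m₂) :
    (Finsupp.mapDomain q (Finsupp.equivFunOnFinite.symm l)).sum g = ∑ j, g (q j) (l j) := by
  rw [Finsupp.sum_mapDomain_index hg0 hgadd, Finsupp.sum_fintype _ _ fun j => hg0 _]
  rfl

noncomputable section

variable {Ω : Type*} [Fintype Ω]

instance : CompactSpace (Belief Ω) := isCompact_iff_compactSpace.mp (isCompact_stdSimplex ℝ Ω)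

namespace SPExp

lemma expect_le {e : SPExp Ω} {f : Belief Ω → ℝ} {B : ℝ} (hf : ∀ p, f p ≤ B) :
    e.expect f ≤ B :=
  calc e.expect f ≤ ∑ p ∈ e.w.support, e.w p * B :=
        Finset.sum_le_sum fun p _ => mul_le_mul_of_nonneg_left (hf p) (e.nonneg p)
    _ = B := by rw [← Finset.sum_mul, e.sum_one, one_mul]

lemma expect_mono {e : SPExp Ω} {f g : Belief Ω → ℝ} (hfg : ∀ p, f p ≤ g p) :
    e.expect f ≤ e.expect g :=
  Finset.sum_le_sum fun p _ => mul_le_mul_of_nonneg_left (hfg p) (e.nonneg p)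

lemma expect_add_const (e : SPExp Ω) (f : Belief Ω → ℝ) (c : ℝ) :
    e.expect (fun p => f p + c) = e.expect f + c := by
  simp only [expect, mul_add, Finset.sum_add_distrib, ← Finset.sum_mul, e.sum_one, one_mul]

lemma sigma_triv (p : Belief Ω) : (triv p).sigma = p := by
  ext ω
  simp [sigma, triv]

lemma support_nonempty (e : SPExp Ω) : e.w.support.Nonempty := by
  rw [Finset.nonempty_iff_ne_empty]
  intro h
  simpa [h] using e.sum_one

variable {ι : Type*} [Fintype ι]

/-- Repeated posteriors among the `q j` have their weights added. -/
def ofTuple (l : stdSimplex ℝ ι) (q : ι → Belief Ω) : SPExp Ω where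
  w := Finsupp.mapDomain q (Finsupp.equivFunOnFinite.symm l)
  nonneg p := by
    simp only [Finsupp.mapDomain, Finsupp.sum_apply, Finsupp.single_apply]
    exact Finset.sum_nonneg fun j _ => by dsimp only; split_ifs <;> simp
  sum_one := by
    change Finsupp.sum _ (fun _ a => a) = 1
    rw [Finsupp.sum_mapDomain_equivFunOnFinite_symm _ _ (fun _ => rfl) fun _ _ _ => rfl]
    exact l.2.2

lemma expect_ofTuple (l : stdSimplex ℝ ι) (q : ι → Belief Ω) (f : Belief Ω → ℝ) :
    (ofTuple l q).expect f = ∑ j, l j * f (q j) :=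
  Finsupp.sum_mapDomain_equivFunOnFinite_symm (g := fun p a => a * f p) _ _ (fun _ => zero_mul _)
    fun _ _ _ => add_mul _ _ _

lemma ext {e e' : SPExp Ω} (h : e.w = e'.w) : e = e' := by
  obtain ⟨w, _, _⟩ := e
  obtain ⟨w', _, _⟩ := e'
  subst h
  rfl

lemma exists_ofTuple_eq (e : SPExp Ω) (hcard : e.tau.card ≤ Fintype.card ι) :
    ∃ (l : stdSimplex ℝ ι) (q : ι → Belief Ω), ofTuple l q = e := by
  have : Nonempty e.w.support := e.support_nonempty.to_subtype
  obtain ⟨emb⟩ : Nonempty (e.w.support ↪ ι) :=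
    Function.Embedding.nonempty_of_card_le (by simpa [tau] using hcard)
  set q : ι → Belief Ω := Subtype.val ∘ Function.invFun emb
  have hq : q ∘ emb = Subtype.val :=
    funext fun x => congrArg Subtype.val (Function.leftInverse_invFun emb.injective x)
  set l : ι →₀ ℝ := (e.w.subtypeDomain (· ∈ e.w.support)).embDomain emb with hl_def
  have hw : Finsupp.mapDomain q (Finsupp.equivFunOnFinite.symm l) = e.w := by
    rw [Finsupp.equivFunOnFinite_symm_coe, hl_def, Finsupp.embDomain_eq_mapDomain,
      ← Finsupp.mapDomain_comp, hq, ← Function.Embedding.coe_subtype,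
      ← Finsupp.embDomain_eq_mapDomain, ← Finsupp.extendDomain_eq_embDomain_subtype,
      Finsupp.extendDomain_subtypeDomain _ fun _ h => h]
  have hl_mem : ⇑l ∈ stdSimplex ℝ ι := by
    refine ⟨fun j => ?_, ?_⟩
    · by_cases hj : j ∈ Set.range emb
      · obtain ⟨x, rfl⟩ := hj
        simpa [hl_def] using e.nonneg x
      · simp [hl_def, Finsupp.embDomain_of_notMem_range _ _ _ hj]
    · have := Finsupp.sum_mapDomain_equivFunOnFinite_symm (g := fun _ a => a) l q (fun _ => rfl)
        fun _ _ _ => rfl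
      rw [hw] at this
      exact this.symm.trans e.sum_one
  exact ⟨⟨l, hl_mem⟩, q, ext hw⟩

variable (ι) in
lemma continuous_expect_ofTuple {f : Belief Ω → ℝ} (hf : Continuous f) :
    Continuous fun x : stdSimplex ℝ ι × (ι → Belief Ω) => (ofTuple x.1 x.2).expect f := by
  simp only [expect_ofTuple]
  exact continuous_finsetSum _ fun j _ =>
    ((continuous_apply j).comp (continuous_subtype_val.comp continuous_fst)).mul
      (hf.comp ((continuous_apply j).comp continuous_snd))

variable (ι) in
lemma continuous_sigma_ofTuple :
    Continuous fun x : stdSimplex ℝ ι × (ι → Belief Ω) => (ofTuple x.1 x.2).sigma :=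
  continuous_induced_rng.2 <| continuous_pi fun ω =>
    continuous_expect_ofTuple ι ((continuous_apply ω).comp continuous_subtype_val)

lemma upperSemicontinuous_expect_ofTuple {g : Belief Ω → ℝ} (hg : UpperSemicontinuous g) :
    UpperSemicontinuous fun x : stdSimplex ℝ ι × (ι → Belief Ω) =>
      (ofTuple x.1 x.2).expect g := by
  simp only [expect_ofTuple]
  exact upperSemicontinuous_sum fun j _ =>
    (hg.comp ((continuous_apply j).comp continuous_snd)).mul_of_continuous_nonneg
      ((continuous_apply j).comp (continuous_subtype_val.comp continuous_fst)) fun x => x.1.2.1 j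

lemma isClosed_setOf_ofTuple_mem {F : Set (SPExp Ω)}
    (hF : ∀ es : ℕ → SPExp Ω, (∀ i, es i ∈ F) → ∀ e : SPExp Ω, WeakTendsto es e → e ∈ F) :
    IsClosed {x : stdSimplex ℝ ι × (ι → Belief Ω) | ofTuple x.1 x.2 ∈ F} :=
  IsSeqClosed.isClosed fun _ x₀ hxF hx =>
    hF _ hxF _ fun _ hf => ((continuous_expect_ofTuple ι hf).tendsto x₀).comp hx

end SPExp

open SPExp

variable {F : Set (SPExp Ω)}

def oneStepValue (F : Set (SPExp Ω)) (g : Belief Ω → ℝ) (p : Belief Ω) : ℝ :=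
  ⨆ e : {e : SPExp Ω // e ∈ F ∧ e.sigma = p}, e.1.expect g

lemma oneStepValue_eq_sSup_image {X : Type*} {E : X → SPExp Ω} (hE : Set.range E = F)
    (g : Belief Ω → ℝ) (p : Belief Ω) :
    oneStepValue F g p =
      sSup ((fun x => (E x).expect g) '' ((fun x => (E x).sigma) ⁻¹' {p})) := by
  refine congrArg sSup (Set.ext fun y => ⟨?_, ?_⟩)
  · rintro ⟨⟨e, heF, rfl⟩, rfl⟩
    obtain ⟨x, rfl⟩ : e ∈ Set.range E := hE ▸ heF
    exact ⟨x, rfl, rfl⟩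
  · rintro ⟨x, hx, rfl⟩
    exact ⟨⟨E x, hE ▸ ⟨x, rfl⟩, hx⟩, rfl⟩

theorem upperSemicontinuous_oneStepValue (hTF : Trivials Ω ⊆ F) {h : ℕ}
    (hA1 : Assumption1 F h) {g : Belief Ω → ℝ} (hg : UpperSemicontinuous g) :
    UpperSemicontinuous (oneStepValue F g) := by
  set X := {x : stdSimplex ℝ (Fin h) × (Fin h → Belief Ω) | ofTuple x.1 x.2 ∈ F}
  have : CompactSpace X :=
    isCompact_iff_compactSpace.mp (isClosed_setOf_ofTuple_mem hA1.2).isCompact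
  set E : X → SPExp Ω := fun x => ofTuple x.1.1 x.1.2
  have hE : Set.range E = F := by
    ext e
    refine ⟨fun ⟨x, hx⟩ => hx ▸ x.2, fun he => ?_⟩
    obtain ⟨l, q, rfl⟩ := exists_ofTuple_eq (ι := Fin h) e (by simpa using hA1.1 e he)
    exact ⟨⟨(l, q), he⟩, rfl⟩
  have hsurj : Function.Surjective fun x => (E x).sigma := fun p => by
    obtain ⟨x, hx⟩ : triv p ∈ Set.range E := hE ▸ hTF ⟨p, rfl⟩
    exact ⟨x, by simp only [hx, sigma_triv]⟩
  rw [show oneStepValue F g = _ from funext (oneStepValue_eq_sSup_image hE g)]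
  exact upperSemicontinuous_sSup_image_fiber
    ((continuous_sigma_ofTuple _).comp continuous_subtype_val) hsurj
    ((upperSemicontinuous_expect_ofTuple hg).comp continuous_subtype_val)

lemma lastBelief_append_singleton (μ : Belief Ω) (ξ : Hist Ω) (a : SPExp Ω × Belief Ω) :
    lastBelief μ (ξ ++ [a]) = lastBelief a.2 ξ := by
  cases ξ <;> rfl

namespace SeqP

variable {μ : Belief Ω}

lemma ext {S T : SeqP F μ} (h : S.next = T.next) : S = T := by
  obtain ⟨_, _, _⟩ := S
  obtain ⟨_, _, _⟩ := T
  subst h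
  rfl

def trivial (hTF : Trivials Ω ⊆ F) (μ : Belief Ω) : SeqP F μ where
  next ξ := triv (lastBelief μ ξ)
  feasible _ := hTF ⟨_, rfl⟩
  bayes _ := sigma_triv _

lemma nonempty (hTF : Trivials Ω ⊆ F) (μ : Belief Ω) : Nonempty (SeqP F μ) := ⟨trivial hTF μ⟩

/-- The continuation of `S` after its first step `a`, which is the last entry of a history. -/
def after (S : SeqP F μ) (a : SPExp Ω × Belief Ω) : SeqP F a.2 where
  next ξ := S.next (ξ ++ [a])
  feasible _ := S.feasible _
  bayes ξ := by rw [S.bayes, lastBelief_append_singleton]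

lemma histExp_after (S : SeqP F μ) (a : SPExp Ω × Belief Ω) (g : Hist Ω → ℝ) :
    ∀ (n : ℕ) (ξ : Hist Ω),
      histExp (S.after a) (fun ζ => g (ζ ++ [a])) n ξ = histExp S g n (ξ ++ [a])
  | 0, _ => rfl
  | n + 1, ξ => by
    simp only [histExp]
    congr 1
    funext p
    exact histExp_after S a g n ((S.next (ξ ++ [a]), p) :: ξ)

lemma stepUtility_succ (v : Belief Ω → ℝ) (S : SeqP F μ) (n : ℕ) :
    stepUtility v S (n + 1) =
      (S.next []).expect fun p => stepUtility v (S.after (S.next [], p)) n := by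
  simp only [stepUtility, histExp]
  congr 1
  funext p
  have h := histExp_after S (S.next [], p) (fun ξ => v (lastBelief μ ξ)) n []
  simp only [lastBelief_append_singleton, List.nil_append] at h
  exact h.symm

/-- Play `e` first, then continue with `σ q` from the realized posterior `q`. -/
def cons (e : SPExp Ω) (heF : e ∈ F) (he : e.sigma = μ) (σ : ∀ q, SeqP F q) : SeqP F μ where
  next ξ := match ξ.getLast? with
    | none => e
    | some a => (σ a.2).next ξ.dropLast
  feasible ξ := by
    rcases List.eq_nil_or_concat ξ with rfl | ⟨l, a, rfl⟩
    · exact heF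
    · simpa using (σ a.2).feasible l
  bayes ξ := by
    rcases List.eq_nil_or_concat ξ with rfl | ⟨l, a, rfl⟩
    · exact he
    · simpa [lastBelief_append_singleton] using (σ a.2).bayes l

lemma cons_after (e : SPExp Ω) (heF : e ∈ F) (he : e.sigma = μ) (σ : ∀ q, SeqP F q)
    (p : Belief Ω) : (cons e heF he σ).after (e, p) = σ p :=
  ext <| funext fun ξ => by simp [after, cons]

lemma stepUtility_cons (v : Belief Ω → ℝ) (e : SPExp Ω) (heF : e ∈ F) (he : e.sigma = μ)
    (σ : ∀ q, SeqP F q) (n : ℕ) :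
    stepUtility v (cons e heF he σ) (n + 1) = e.expect fun p => stepUtility v (σ p) n := by
  rw [stepUtility_succ]
  congr 1
  funext p
  rw [← cons_after e heF he σ p]
  rfl

end SeqP

variable {μ : Belief Ω} {v g : Belief Ω → ℝ} {B : ℝ}

lemma histExp_le {S : SeqP F μ} {g : Hist Ω → ℝ} (hg : ∀ ξ, g ξ ≤ B) :
    ∀ (n : ℕ) (ξ : Hist Ω), histExp S g n ξ ≤ B
  | 0, ξ => hg ξ
  | n + 1, _ => expect_le fun _ => histExp_le hg n _

lemma stepUtility_le (hv : ∀ p, v p ≤ B) (S : SeqP F μ) (n : ℕ) : stepUtility v S n ≤ B :=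
  histExp_le (fun _ => hv _) n []

lemma bddAbove_range_stepUtility (hv : ∀ p, v p ≤ B) (n : ℕ) :
    BddAbove (Set.range fun S : SeqP F μ => stepUtility v S n) :=
  ⟨B, Set.forall_mem_range.2 fun S => stepUtility_le hv S n⟩

lemma vN_le (hTF : Trivials Ω ⊆ F) (hv : ∀ p, v p ≤ B) (n : ℕ) (p : Belief Ω) :
    vN F v n p ≤ B :=
  have := SeqP.nonempty hTF p
  ciSup_le fun S => stepUtility_le hv S n

lemma vN_zero (hTF : Trivials Ω ⊆ F) : vN F v 0 = v :=
  funext fun p =>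
    have := SeqP.nonempty hTF p
    ciSup_const

lemma bddAbove_range_expect (hg : ∀ p, g p ≤ B) (μ : Belief Ω) :
    BddAbove (Set.range fun e : {e : SPExp Ω // e ∈ F ∧ e.sigma = μ} => e.1.expect g) :=
  ⟨B, Set.forall_mem_range.2 fun _ => expect_le hg⟩

lemma vN_succ_le (hTF : Trivials Ω ⊆ F) (hv : ∀ p, v p ≤ B) (n : ℕ) (μ : Belief Ω) :
    vN F v (n + 1) μ ≤ oneStepValue F (vN F v n) μ := by
  have := SeqP.nonempty hTF μ
  refine ciSup_le fun S => ?_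
  rw [SeqP.stepUtility_succ]
  calc (S.next []).expect (fun p => stepUtility v (S.after (S.next [], p)) n)
      ≤ (S.next []).expect (vN F v n) :=
        expect_mono fun p => le_ciSup (bddAbove_range_stepUtility hv n) _
    _ ≤ oneStepValue F (vN F v n) μ :=
        le_ciSup (bddAbove_range_expect (vN_le hTF hv n) μ) ⟨S.next [], S.feasible [], S.bayes []⟩

lemma oneStepValue_le_vN_succ (hTF : Trivials Ω ⊆ F) (hv : ∀ p, v p ≤ B) (n : ℕ)
    (μ : Belief Ω) : oneStepValue F (vN F v n) μ ≤ vN F v (n + 1) μ := by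
  have : Nonempty {e : SPExp Ω // e ∈ F ∧ e.sigma = μ} := ⟨⟨triv μ, hTF ⟨μ, rfl⟩, sigma_triv μ⟩⟩
  refine ciSup_le fun ⟨e, heF, he⟩ => le_of_forall_pos_le_add fun ε hε => ?_
  have hσ : ∀ q, ∃ S : SeqP F q, vN F v n q - ε < stepUtility v S n := fun q =>
    have := SeqP.nonempty hTF q
    exists_lt_of_lt_ciSup (sub_lt_self _ hε)
  choose σ hσ using hσ
  calc e.expect (vN F v n)
      ≤ e.expect (fun q => stepUtility v (σ q) n + ε) :=
        expect_mono fun q => (sub_lt_iff_lt_add.mp (hσ q)).le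
    _ = stepUtility v (SeqP.cons e heF he σ) (n + 1) + ε := by
        rw [expect_add_const, SeqP.stepUtility_cons]
    _ ≤ vN F v (n + 1) μ + ε :=
        add_le_add_left (le_ciSup (bddAbove_range_stepUtility hv (n + 1)) _) ε

lemma vN_succ (hTF : Trivials Ω ⊆ F) (hv : ∀ p, v p ≤ B) (n : ℕ) :
    vN F v (n + 1) = oneStepValue F (vN F v n) :=
  funext fun μ => (vN_succ_le hTF hv n μ).antisymm (oneStepValue_le_vN_succ hTF hv n μ)

end

theorem lem_upper_semicont_vN_general {Ω : Type*} [Fintype Ω]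
    (F : Set (SPExp Ω)) (hTF : Trivials Ω ⊆ F)
    (v : Belief Ω → ℝ) (husc : UpperSemicontinuous v)
    (h : ℕ) (hA1 : Assumption1 F h) :
    ∀ n : ℕ, UpperSemicontinuous (vN F v n) := by
  obtain ⟨B, hB⟩ : BddAbove (Set.range v) := by
    simpa using (husc.upperSemicontinuousOn Set.univ).bddAbove_of_isCompact isCompact_univ
  intro n
  induction n with
  | zero => rwa [vN_zero hTF]
  | succ n ih =>
    rw [vN_succ hTF (fun p => hB ⟨p, rfl⟩)]
    exact upperSemicontinuous_oneStepValue hTF hA1 ih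

/-- Lemma 6 (lem-upper-semicont), first part: under Assumption 1, every v_n is
upper semicontinuous. -/
theorem lem_upper_semicont_vN {Ω : Type*} [Fintype Ω] [Nonempty Ω]
    (F : Set (SPExp Ω)) (hTF : Trivials Ω ⊆ F)
    (v : Belief Ω → ℝ) (Vlo Vhi : ℝ) (hVlo : 0 < Vlo) (hVV : Vlo ≤ Vhi)
    (hvlo : ∀ p, Vlo ≤ v p) (hvhi : ∀ p, v p ≤ Vhi)
    (husc : UpperSemicontinuous v)
    (h : ℕ) (hA1 : Assumption1 F h) :
    ∀ n : ℕ, UpperSemicontinuous (vN F v n) :=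
  lem_upper_semicont_vN_general F hTF v husc h hA1
end

section
/- Let S be a Markov sequential persuasion starting from μ compatible with (μ, D, Z, ρ). If Z ⊆ N, the map ρ takes only exact experiments, and for every ε > 0 there exists n ∈ ℕ such that the n-step belief b_n induced by S satisfies Pr[b_n ∈ Z] ≥ 1 − ε, then S is optimal, i.e., 𝒱(S) = v_∞(μ). -/
open Filter Topology
open scoped Classical

noncomputable section MyHelpers
variable {Ω : Type*} [Fintype Ω] {F : Set (SPExp Ω)} {μ : Belief Ω}

lemma SPExp.expect_triv (p : Belief Ω) (f : Belief Ω → ℝ) :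
    (SPExp.triv p).expect f = f p := by
  simp [SPExp.expect, SPExp.triv, Finsupp.support_single_ne_zero _ one_ne_zero]

lemma SPExp.sigma_triv_s14 (p : Belief Ω) : (SPExp.triv p).sigma = p :=
  Subtype.ext (funext fun ω => by
    simp [SPExp.sigma, SPExp.triv, Finsupp.support_single_ne_zero _ one_ne_zero])

lemma SPExp.expect_sub (e : SPExp Ω) (f g : Belief Ω → ℝ) :
    e.expect (fun p => f p - g p) = e.expect f - e.expect g := by
  simp [SPExp.expect, mul_sub, Finset.sum_sub_distrib]

lemma SPExp.expect_const (e : SPExp Ω) (c : ℝ) : e.expect (fun _ => c) = c := by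
  simp [SPExp.expect, ← Finset.sum_mul, e.sum_one]

lemma SPExp.expect_mono_s14 (e : SPExp Ω) {f g : Belief Ω → ℝ} (h : ∀ p, f p ≤ g p) :
    e.expect f ≤ e.expect g :=
  Finset.sum_le_sum fun p _ => mul_le_mul_of_nonneg_left (h p) (e.nonneg p)

lemma histExp_sub (S : SeqP F μ) (f g : Hist Ω → ℝ) :
    ∀ (n : ℕ) (ξ : Hist Ω),
      histExp S (fun ζ => f ζ - g ζ) n ξ = histExp S f n ξ - histExp S g n ξ
  | 0, ξ => rfl
  | n + 1, ξ => by
    simp only [histExp]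
    rw [← SPExp.expect_sub]
    exact congrArg _ (funext fun p => histExp_sub S f g n _)

lemma histExp_const (S : SeqP F μ) (c : ℝ) :
    ∀ (n : ℕ) (ξ : Hist Ω), histExp S (fun _ => c) n ξ = c
  | 0, ξ => rfl
  | n + 1, ξ => by
    simp only [histExp]
    rw [show (fun p => histExp S (fun _ => c) n ((S.next ξ, p) :: ξ)) = fun _ => c from
      funext fun p => histExp_const S c n _]
    exact SPExp.expect_const _ c

lemma histExp_mono (S : SeqP F μ) {f g : Hist Ω → ℝ} (h : ∀ ζ, f ζ ≤ g ζ) :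
    ∀ (n : ℕ) (ξ : Hist Ω), histExp S f n ξ ≤ histExp S g n ξ
  | 0, ξ => h ξ
  | n + 1, ξ => by
    simp only [histExp]
    exact SPExp.expect_mono_s14 _ fun p => histExp_mono S h n _

/-- The always-trivial strategy. -/
def trivSeqP (hTF : Trivials Ω ⊆ F) (p : Belief Ω) : SeqP F p where
  next ξ := SPExp.triv (lastBelief p ξ)
  feasible ξ := hTF ⟨_, rfl⟩
  bayes ξ := SPExp.sigma_triv_s14 _

lemma lastBelief_padHist (μ : Belief Ω) (ξ : Hist Ω) (l : ℕ) :
    lastBelief μ (padHist μ ξ l) = lastBelief μ ξ := by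
  cases l with
  | zero => simp [padHist]
  | succ l => simp [padHist, List.replicate_succ, lastBelief]


lemma SPExp.expect_smul' (e : SPExp Ω) (c : ℝ) (f : Belief Ω → ℝ) :
    e.expect (fun p => c * f p) = c * e.expect f := by
  simp only [SPExp.expect, Finset.mul_sum]
  exact Finset.sum_congr rfl fun p _ => by ring

lemma histExp_smul (S : SeqP F μ) (c : ℝ) (f : Hist Ω → ℝ) :
    ∀ (n : ℕ) (ξ : Hist Ω),
      histExp S (fun ζ => c * f ζ) n ξ = c * histExp S f n ξ
  | 0, ξ => rfl
  | n + 1, ξ => by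
    simp only [histExp]
    rw [← SPExp.expect_smul']
    exact congrArg _ (funext fun p => histExp_smul S c f n _)
end MyHelpers

/-- Lemma 7 (lem-Markov-optimal): a Markov sequential persuasion with terminal beliefs
in N, exact experiments, and vanishing non-terminated mass is optimal. -/
theorem lem_Markov_optimal {Ω : Type*} [Fintype Ω] [Nonempty Ω]
    (F : Set (SPExp Ω)) (hTF : Trivials Ω ⊆ F)
    (v : Belief Ω → ℝ) (Vlo Vhi : ℝ) (hVlo : 0 < Vlo) (hVV : Vlo ≤ Vhi)
    (hvlo : ∀ p, Vlo ≤ v p) (hvhi : ∀ p, v p ≤ Vhi)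
    (husc : UpperSemicontinuous v)
    (μ : Belief Ω) (D Z : Set (Belief Ω)) (ρ : Belief Ω → SPExp Ω)
    (hDZ : Disjoint D Z) (hμDZ : μ ∈ D ∪ Z)
    (hρ : ∀ p ∈ D, ρ p ∈ F \ Trivials Ω ∧ SPExp.sigma (ρ p) = p ∧
      ↑(SPExp.tau (ρ p)) ⊆ D ∪ Z)
    (S : SeqP F μ) (hS : MarkovCompatible S D Z ρ)
    (hZN : ∀ p ∈ Z, vInf F v p = v p)
    (hexact : ∀ p ∈ D,
      vInf F v (SPExp.sigma (ρ p)) = SPExp.expect (ρ p) (vInf F v))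
    (hterm : ∀ ε : ℝ, 0 < ε → ∃ n : ℕ, 1 - ε ≤ massIn S Z n) :
    infUtility v S = vInf F v μ := by
  classical
  have hVhi0 : (0:ℝ) < Vhi := hVlo.trans_le hVV
  -- the terminated-payoff function
  set g : Hist Ω → ℝ :=
    fun ξ => if TerminatesAfter S ξ then v (lastBelief μ ξ) else 0 with hg
  set W : Hist Ω → ℝ := fun ξ => vInf F v (lastBelief μ ξ) with hW
  set indZ : Hist Ω → ℝ := fun ξ => if lastBelief μ ξ ∈ Z then 1 else 0 with hindZ
  -- bounds on infUtility for any strategy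
  have hgbd : ∀ (p : Belief Ω) (S' : SeqP F p) (ξ : Hist Ω),
      (if TerminatesAfter S' ξ then v (lastBelief p ξ) else 0) ≤ Vhi := by
    intro p S' ξ
    split
    · exact hvhi _
    · exact hVhi0.le
  have hinf_le : ∀ (p : Belief Ω) (S' : SeqP F p), infUtility v S' ≤ Vhi := by
    intro p S'
    refine ciSup_le fun n => ?_
    calc histExp S' (fun ξ => if TerminatesAfter S' ξ then v (lastBelief p ξ) else 0) n []
        ≤ histExp S' (fun _ => Vhi) n [] := histExp_mono S' (hgbd p S') n []
      _ = Vhi := histExp_const S' Vhi n []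
  have hne : ∀ p : Belief Ω, Nonempty (SeqP F p) := fun p => ⟨trivSeqP hTF p⟩
  have hvInf_le : ∀ p : Belief Ω, vInf F v p ≤ Vhi := by
    intro p
    have := hne p
    exact ciSup_le fun S' => hinf_le p S'
  -- upper bound
  have h1 : infUtility v S ≤ vInf F v μ :=
    le_ciSup ⟨Vhi, by rintro x ⟨S', rfl⟩; exact hinf_le μ S'⟩ S
  -- every partial terminated value is below infUtility
  have hstep_le : ∀ n : ℕ, histExp S g n [] ≤ infUtility v S := fun n =>
    le_ciSup (f := fun n => histExp S g n [])
      ⟨Vhi, by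
        rintro x ⟨n, rfl⟩
        calc histExp S g n [] ≤ histExp S (fun _ => Vhi) n [] :=
              histExp_mono S (hgbd μ S) n []
          _ = Vhi := histExp_const S Vhi n []⟩ n
  -- martingale property of W
  have hmart : ∀ (n : ℕ) (ξ : Hist Ω), lastBelief μ ξ ∈ D ∪ Z →
      histExp S W n ξ = W ξ := by
    intro n
    induction n with
    | zero => intro ξ _; rfl
    | succ n ih =>
      intro ξ hmem
      rcases hmem with hD | hZ
      · have hnext : S.next ξ = ρ (lastBelief μ ξ) := (hS ξ).1 hD
        simp only [histExp, hnext]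
        have hsub := (hρ _ hD).2.2
        have : (ρ (lastBelief μ ξ)).expect
            (fun p => histExp S W n ((ρ (lastBelief μ ξ), p) :: ξ))
            = (ρ (lastBelief μ ξ)).expect (vInf F v) := by
          refine Finset.sum_congr rfl fun p hp => ?_
          have hpDZ : p ∈ D ∪ Z := hsub (Finset.mem_coe.mpr hp)
          exact congrArg ((ρ (lastBelief μ ξ)).w p * ·)
            (ih ((ρ (lastBelief μ ξ), p) :: ξ) hpDZ)
        rw [this, ← hexact _ hD, (hρ _ hD).2.1]
      · have hnext : S.next ξ = SPExp.triv (lastBelief μ ξ) := (hS ξ).2 hZ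
        simp only [histExp, hnext]
        rw [SPExp.expect_triv]
        exact ih _ (Or.inr hZ)
  -- termination on Z
  have htermZ : ∀ ξ : Hist Ω, lastBelief μ ξ ∈ Z → TerminatesAfter S ξ := by
    intro ξ hZ l
    have h := (hS (padHist μ ξ l)).2
    rw [lastBelief_padHist] at h
    exact h hZ
  -- pointwise inequality
  have hpt : ∀ ξ : Hist Ω, W ξ - Vhi * (1 - indZ ξ) ≤ g ξ := by
    intro ξ
    by_cases hZ : lastBelief μ ξ ∈ Z
    · have : g ξ = v (lastBelief μ ξ) := by
        simp only [hg, if_pos (htermZ ξ hZ)]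
      rw [this, hindZ]
      simp only [if_pos hZ]
      rw [← hZN _ hZ]
      simp [hW]
    · have hg0 : 0 ≤ g ξ := by
        show (0:ℝ) ≤ if TerminatesAfter S ξ then v (lastBelief μ ξ) else 0
        split
        · exact (hVlo.trans_le (hvlo _)).le
        · exact le_rfl
      have : W ξ - Vhi * (1 - indZ ξ) ≤ 0 := by
        rw [hindZ]
        simp only [if_neg hZ]
        have := hvInf_le (lastBelief μ ξ)
        simp only [hW]
        linarith
      linarith
  -- lower bound
  have h2 : vInf F v μ ≤ infUtility v S := by
    refine le_of_forall_pos_le_add fun ε hε => ?_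
    obtain ⟨n, hn⟩ := hterm (ε / Vhi) (div_pos hε hVhi0)
    have hmass : massIn S Z n = histExp S indZ n [] := rfl
    have key : vInf F v μ - Vhi * (1 - massIn S Z n) ≤ histExp S g n [] := by
      have hWn : histExp S W n [] = vInf F v μ := hmart n [] hμDZ
      calc vInf F v μ - Vhi * (1 - massIn S Z n)
          = histExp S W n [] - histExp S (fun ξ => Vhi * (1 - indZ ξ)) n [] := by
            rw [hWn, hmass]
            congr 1
            have heq : (fun ξ => Vhi * (1 - indZ ξ))
                = fun ξ => (fun _ : Hist Ω => Vhi) ξ - (fun ζ => Vhi * indZ ζ) ξ := by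
              funext ξ; ring
            rw [heq, histExp_sub S, histExp_const S, histExp_smul S]
            ring
        _ = histExp S (fun ξ => W ξ - Vhi * (1 - indZ ξ)) n [] :=
            (histExp_sub S W (fun ξ => Vhi * (1 - indZ ξ)) n []).symm
        _ ≤ histExp S g n [] := histExp_mono S hpt n []
    have hmassle : 1 - massIn S Z n ≤ ε / Vhi := by linarith
    have : vInf F v μ - ε ≤ histExp S g n [] := by
      have : Vhi * (1 - massIn S Z n) ≤ ε := by
        calc Vhi * (1 - massIn S Z n) ≤ Vhi * (ε / Vhi) :=
              mul_le_mul_of_nonneg_left hmassle hVhi0.le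
          _ = ε := mul_div_cancel₀ ε hVhi0.ne'
      linarith
    linarith [hstep_le n]
  linarith
end
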